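/- Let σ > 0, a > 0 and 0 < α < 1, let z_α = Φ^{-1}(1−α), and let θ ∈ [0, aσ]. If X is a real random variable with the Gaussian distribution N(θ, σ²), then P( θ ≤ max(0, min(X + z_α σ, aσ)) ) ≥ 1 − α; that is, the interval [0, max(0, min(X + z_α σ, aσ))] covers θ with probability at least 1 − α. -/

import Mathlib

/-!
Since `θ ≤ aσ`, the truncations at `0` and `aσ` never lose coverage, so the coverage event
contains `{X ≥ θ - z_α σ}`. Writing `X = θ - σ Z` with `Z ~ N(0, 1)`, this is `{Z ≤ z_α}`,
of probability `Φ(z_α) = 1 - α`.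
-/

open MeasureTheory ProbabilityTheory

/-- The standard normal density `φ`. -/
noncomputable def stdNormalPDF (t : ℝ) : ℝ :=
  (Real.sqrt (2 * Real.pi))⁻¹ * Real.exp (-t^2/2)

/-- The standard normal cumulative distribution function `Φ`. -/
noncomputable def stdNormalCDF (x : ℝ) : ℝ :=
  ∫ t in Set.Iic x, stdNormalPDF t

lemma stdNormalPDF_eq_gaussianPDFReal (t : ℝ) : stdNormalPDF t = gaussianPDFReal 0 1 t := by
  simp [stdNormalPDF, gaussianPDFReal, neg_div]

lemma gaussianReal_zero_one_Iic (z : ℝ) :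
    gaussianReal 0 1 (Set.Iic z) = ENNReal.ofReal (stdNormalCDF z) := by
  simp_rw [gaussianReal_apply_eq_integral 0 one_ne_zero, stdNormalCDF,
    stdNormalPDF_eq_gaussianPDFReal]

lemma gaussianReal_Ici_sub_mul (θ z : ℝ) {σ : ℝ} (hσ : 0 < σ) :
    gaussianReal θ (σ ^ 2).toNNReal (Set.Ici (θ - z * σ)) =
      ENNReal.ofReal (stdNormalCDF z) := by
  have hstd :
      (gaussianReal 0 1).map (fun x ↦ θ - σ * x) = gaussianReal θ (σ ^ 2).toNNReal := by
    have hcomp : (fun x : ℝ ↦ θ - σ * x) = (θ - ·) ∘ (σ * ·) := rfl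
    rw [hcomp, ← Measure.map_map (by fun_prop) (by fun_prop), gaussianReal_map_const_mul,
      gaussianReal_map_const_sub, mul_zero, sub_zero, mul_one]
    congr 1
    exact (Real.toNNReal_of_nonneg (sq_nonneg σ)).symm
  have hpre : (fun x ↦ θ - σ * x) ⁻¹' Set.Ici (θ - z * σ) = Set.Iic z := by
    ext x
    simp only [Set.mem_preimage, Set.mem_Ici, Set.mem_Iic, sub_le_sub_iff_left,
      mul_comm σ x, mul_le_mul_iff_left₀ hσ]
  rw [← hstd, Measure.map_apply (by fun_prop) measurableSet_Ici, hpre, gaussianReal_zero_one_Iic]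

theorem coverage_truncated_interval_general
    {Ω : Type*} [MeasurableSpace Ω] (P : Measure Ω)
    (σ a α θ zα : ℝ) (hσ : 0 < σ)
    (hz : stdNormalCDF zα = 1 - α)
    (hθ1 : θ ≤ a * σ)
    (X : Ω → ℝ) (hX : P.map X = gaussianReal θ (Real.toNNReal (σ^2))) :
    ENNReal.ofReal (1 - α) ≤ P {ω | θ ≤ max 0 (min (X ω + zα * σ) (a * σ))} := by
  have hXm : AEMeasurable X P := .of_map_ne_zero (hX ▸ IsProbabilityMeasure.ne_zero _)
  have hcover :
      X ⁻¹' Set.Ici (θ - zα * σ) ⊆ {ω | θ ≤ max 0 (min (X ω + zα * σ) (a * σ))} :=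
    fun ω hω ↦ by
      simp only [Set.mem_preimage, Set.mem_Ici] at hω
      exact le_max_of_le_right (le_min (by linarith) hθ1)
  calc ENNReal.ofReal (1 - α) = P.map X (Set.Ici (θ - zα * σ)) := by
        rw [hX, gaussianReal_Ici_sub_mul θ zα hσ, hz]
    _ = P (X ⁻¹' Set.Ici (θ - zα * σ)) :=
        Measure.map_apply_of_aemeasurable hXm measurableSet_Ici
    _ ≤ _ := measure_mono hcover

/-- Coverage of the optimal one-sided truncated interval in the proof of Theorem 1 of
Cai, Low and Xia (2013): if `θ ∈ [0, aσ]`, `X ~ N(θ, σ²)` and `Φ(z_α) = 1 − α`, then the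
interval `[0, max(0, min(X + z_α σ, aσ))]` covers `θ` with probability at least `1 − α`. -/
theorem coverage_truncated_interval
    {Ω : Type*} [MeasurableSpace Ω] (P : Measure Ω) [IsProbabilityMeasure P]
    (σ a α θ zα : ℝ) (hσ : 0 < σ) (ha : 0 < a) (hα0 : 0 < α) (hα1 : α < 1)
    (hz : stdNormalCDF zα = 1 - α)
    (hθ0 : 0 ≤ θ) (hθ1 : θ ≤ a * σ)
    (X : Ω → ℝ) (hX : P.map X = gaussianReal θ (Real.toNNReal (σ^2))) :
    ENNReal.ofReal (1 - α) ≤ P {ω | θ ≤ max 0 (min (X ω + zα * σ) (a * σ))} :=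
  coverage_truncated_interval_general P σ a α θ zα hσ hz hθ1 X hX
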